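/- Let G be a finite d-regular simple graph on n vertices with d ≥ 1, let p ∈ [0,1], and let k ≥ 1 be an integer. Let W be the (random) set of vertices of G belonging to connected components of G_p of order at least d^k. Then P[ | |W| − E[|W|] | ≥ n^{2/3} ] ≤ 2·exp( − n^{1/3} / (5·d^{2k+1}) ). -/

import Mathlib

open Finset

variable {V : Type*}

/-- The number of neighbours of `v` in `G`. -/
noncomputable def degAt (G : SimpleGraph V) (v : V) : ℕ := {w | G.Adj v w}.ncard

/-- `G` is `d`-regular. -/
def IsRegOfDeg (G : SimpleGraph V) (d : ℕ) : Prop := ∀ v, degAt G v = d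

/-- The order (number of vertices) of the connected component of `v` in `H`. -/
noncomputable def compCard (H : SimpleGraph V) (v : V) : ℕ := {w | H.Reachable v w}.ncard

/-- The order of the largest connected component of `H`. -/
noncomputable def maxCompCard [Fintype V] (H : SimpleGraph V) : ℕ :=
  Finset.univ.sup (compCard H)

/-- The edge set of `G` as a `Finset`. -/
noncomputable def edgeFins (G : SimpleGraph V) [Fintype V] : Finset (Sym2 V) :=
  G.edgeSet.toFinite.toFinset

open Classical in
/-- The probability of the event `A` under bond percolation on `G` with retention
probability `p`: each edge of `G` is retained independently with probability `p`. -/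
noncomputable def percProb [Fintype V] (G : SimpleGraph V) (p : ℝ)
    (A : SimpleGraph V → Prop) : ℝ :=
  ∑ F ∈ (edgeFins G).powerset,
    if A (SimpleGraph.fromEdgeSet (↑F)) then
      p ^ F.card * (1 - p) ^ ((edgeFins G).card - F.card) else 0

open Classical in
/-- Percolation expectation of an ℝ-valued observable. -/
noncomputable def percExp [Fintype V] (G : SimpleGraph V) (p : ℝ)
    (X : SimpleGraph V → ℝ) : ℝ :=
  ∑ F ∈ (edgeFins G).powerset,
    p ^ F.card * (1 - p) ^ ((edgeFins G).card - F.card) *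
      X (SimpleGraph.fromEdgeSet (↑F))

open Classical in
/-- The probability of the event `A` under three independent bond percolations on `G`
with retention probabilities `p₁, p₂, p₃`. -/
noncomputable def percProb3 [Fintype V] (G : SimpleGraph V) (p₁ p₂ p₃ : ℝ)
    (A : SimpleGraph V → SimpleGraph V → SimpleGraph V → Prop) : ℝ :=
  ∑ F₁ ∈ (edgeFins G).powerset, ∑ F₂ ∈ (edgeFins G).powerset, ∑ F₃ ∈ (edgeFins G).powerset,
    if A (SimpleGraph.fromEdgeSet (↑F₁)) (SimpleGraph.fromEdgeSet (↑F₂))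
        (SimpleGraph.fromEdgeSet (↑F₃)) then
      (p₁ ^ F₁.card * (1 - p₁) ^ ((edgeFins G).card - F₁.card)) *
      (p₂ ^ F₂.card * (1 - p₂) ^ ((edgeFins G).card - F₂.card)) *
      (p₃ ^ F₃.card * (1 - p₃) ^ ((edgeFins G).card - F₃.card))
    else 0

/-- The Cartesian product of the graphs `Gs i`, `i : Fin t`. -/
def prodGraph {t : ℕ} {V : Fin t → Type*} (Gs : ∀ i, SimpleGraph (V i)) :
    SimpleGraph (∀ i, V i) where
  Adj u v := ∃ i, (Gs i).Adj (u i) (v i) ∧ ∀ j, j ≠ i → u j = v j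
  symm := by
    refine ⟨?_⟩
    rintro u v ⟨i, hadj, h⟩
    exact ⟨i, hadj.symm, fun j hj => (h j hj).symm⟩
  loopless := by
    refine ⟨?_⟩
    rintro u ⟨i, hadj, -⟩
    exact (Gs i).loopless.irrefl _ hadj

/-!
Reveal the edges of `G` one at a time. Adding an edge `xy` can only merge the components of `x`
and `y`, so the set `W` of vertices in components of order at least `K = d^k` gains at most the
vertices of these two components, and only if they were small: `|W|` has bounded differences
`c = 2 d^k`. McDiarmid's inequality over the `m = nd/2` edges bounds the tail by
`2 exp(-t²/(2 m c²))`, which for `t = n^{2/3}` is `2 exp(-n^{1/3}/(4 d^{2k+1}))`.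

McDiarmid's inequality is proved by induction on the edge set: conditioning on one edge replaces
`f` by its average over the status of that edge, which still has bounded differences, and the
two-point Hoeffding bound `p e^{la} + (1-p) e^{lb} ≤ e^{l(pa+(1-p)b) + l²c²/2}`, valid for
`|a - b| ≤ c`, controls the moment generating function.
-/

lemma exp_mul_le_cosh_add_sinh {c y : ℝ} (hc : 0 < c) (hy : |y| ≤ c) (l : ℝ) :
    Real.exp (l * y) ≤ Real.cosh (l * c) + y / c * Real.sinh (l * c) := by
  obtain ⟨hy₁, hy₂⟩ := abs_le.1 hy
  have hconv := convexOn_exp.2 (Set.mem_univ (l * c)) (Set.mem_univ (-(l * c)))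
    (div_nonneg (by linarith : 0 ≤ c + y) (by positivity : (0 : ℝ) ≤ 2 * c))
    (div_nonneg (by linarith : 0 ≤ c - y) (by positivity : (0 : ℝ) ≤ 2 * c))
    (by field_simp; ring)
  have harg : (c + y) / (2 * c) * (l * c) + (c - y) / (2 * c) * -(l * c) = l * y := by
    field_simp
    ring
  rw [smul_eq_mul, smul_eq_mul, harg] at hconv
  refine hconv.trans_eq ?_
  rw [smul_eq_mul, smul_eq_mul, Real.cosh_eq, Real.sinh_eq]
  field_simp
  ring

lemma two_point_exp_le {p a b c : ℝ} (hp0 : 0 ≤ p) (hp1 : p ≤ 1) (hc : 0 < c)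
    (hab : |a - b| ≤ c) (l : ℝ) :
    p * Real.exp (l * a) + (1 - p) * Real.exp (l * b) ≤
      Real.exp (l * (p * a + (1 - p) * b) + l ^ 2 * c ^ 2 / 2) := by
  set μ := p * a + (1 - p) * b
  have ha : |a - μ| ≤ c := by
    rw [show a - μ = (1 - p) * (a - b) by ring, abs_mul, abs_of_nonneg (by linarith)]
    nlinarith [abs_nonneg (a - b)]
  have hb : |b - μ| ≤ c := by
    rw [show b - μ = -p * (a - b) by ring, abs_mul, abs_neg, abs_of_nonneg hp0]
    nlinarith [abs_nonneg (a - b)]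
  have hcentered : p * Real.exp (l * (a - μ)) + (1 - p) * Real.exp (l * (b - μ)) ≤
      Real.exp (l ^ 2 * c ^ 2 / 2) :=
    calc p * Real.exp (l * (a - μ)) + (1 - p) * Real.exp (l * (b - μ))
        ≤ p * (Real.cosh (l * c) + (a - μ) / c * Real.sinh (l * c)) +
            (1 - p) * (Real.cosh (l * c) + (b - μ) / c * Real.sinh (l * c)) := by
          have hp1' : 0 ≤ 1 - p := by linarith
          gcongr <;> exact exp_mul_le_cosh_add_sinh hc ‹_› l
      _ = Real.cosh (l * c) := by field_simp; ring
      _ ≤ Real.exp (l ^ 2 * c ^ 2 / 2) := by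
          simpa only [mul_pow] using Real.cosh_le_exp_half_sq (l * c)
  have hshift (x : ℝ) : Real.exp (l * x) = Real.exp (l * μ) * Real.exp (l * (x - μ)) := by
    rw [← Real.exp_add]
    ring_nf
  calc p * Real.exp (l * a) + (1 - p) * Real.exp (l * b)
      = Real.exp (l * μ) * (p * Real.exp (l * (a - μ)) + (1 - p) * Real.exp (l * (b - μ))) := by
        rw [hshift a, hshift b]; ring
    _ ≤ Real.exp (l * μ) * Real.exp (l ^ 2 * c ^ 2 / 2) := by gcongr
    _ = Real.exp (l * μ + l ^ 2 * c ^ 2 / 2) := (Real.exp_add _ _).symm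

namespace Finset

variable {ι : Type*}

noncomputable def bernoulliWeight (p : ℝ) (s F : Finset ι) : ℝ :=
  p ^ F.card * (1 - p) ^ (s.card - F.card)

noncomputable def bernoulliMean (p : ℝ) (s : Finset ι) (f : Finset ι → ℝ) : ℝ :=
  ∑ F ∈ s.powerset, bernoulliWeight p s F * f F

open Classical in
noncomputable def bernoulliProb (p : ℝ) (s : Finset ι) (P : Finset ι → Prop) : ℝ :=
  ∑ F ∈ s.powerset, if P F then bernoulliWeight p s F else 0

lemma bernoulliWeight_nonneg {p : ℝ} (hp0 : 0 ≤ p) (hp1 : p ≤ 1) (s F : Finset ι) :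
    0 ≤ bernoulliWeight p s F := by
  have : 0 ≤ 1 - p := by linarith
  unfold bernoulliWeight
  positivity

lemma sum_bernoulliWeight (p : ℝ) (s : Finset ι) :
    ∑ F ∈ s.powerset, bernoulliWeight p s F = 1 := by
  simp [bernoulliWeight, sum_pow_mul_eq_add_pow]

lemma bernoulliProb_le_one {p : ℝ} (hp0 : 0 ≤ p) (hp1 : p ≤ 1) (s : Finset ι)
    (P : Finset ι → Prop) : bernoulliProb p s P ≤ 1 := by
  classical
  calc bernoulliProb p s P ≤ ∑ F ∈ s.powerset, bernoulliWeight p s F := by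
        unfold bernoulliProb
        gcongr with F
        split_ifs
        exacts [le_rfl, bernoulliWeight_nonneg hp0 hp1 s F]
    _ = 1 := sum_bernoulliWeight p s

lemma bernoulliProb_le_add {p : ℝ} (hp0 : 0 ≤ p) (hp1 : p ≤ 1) (s : Finset ι)
    {P Q R : Finset ι → Prop} (h : ∀ F, P F → Q F ∨ R F) :
    bernoulliProb p s P ≤ bernoulliProb p s Q + bernoulliProb p s R := by
  classical
  unfold bernoulliProb
  rw [← sum_add_distrib]
  gcongr with F
  have := bernoulliWeight_nonneg hp0 hp1 s F
  have := h F
  split_ifs <;> simp_all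

lemma bernoulliMean_mono {p : ℝ} (hp0 : 0 ≤ p) (hp1 : p ≤ 1) (s : Finset ι)
    {f g : Finset ι → ℝ} (h : ∀ F, f F ≤ g F) :
    bernoulliMean p s f ≤ bernoulliMean p s g :=
  sum_le_sum fun F _ => mul_le_mul_of_nonneg_left (h F) (bernoulliWeight_nonneg hp0 hp1 s F)

lemma bernoulliMean_const_mul (p a : ℝ) (s : Finset ι) (f : Finset ι → ℝ) :
    bernoulliMean p s (fun F => a * f F) = a * bernoulliMean p s f := by
  simp only [bernoulliMean, mul_sum, mul_left_comm]

lemma bernoulliMean_neg (p : ℝ) (s : Finset ι) (f : Finset ι → ℝ) :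
    bernoulliMean p s (fun F => -f F) = -bernoulliMean p s f := by
  simpa using bernoulliMean_const_mul p (-1) s f

lemma bernoulliProb_le_exp_mul {p : ℝ} (hp0 : 0 ≤ p) (hp1 : p ≤ 1) (s : Finset ι)
    (X : Finset ι → ℝ) (t : ℝ) {l : ℝ} (hl : 0 ≤ l) :
    bernoulliProb p s (fun F => t ≤ X F) ≤
      Real.exp (-(l * t)) * bernoulliMean p s (fun F => Real.exp (l * X F)) := by
  classical
  unfold bernoulliProb bernoulliMean
  rw [mul_sum]
  gcongr with F
  have hw := bernoulliWeight_nonneg hp0 hp1 s F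
  split_ifs with ht
  · have : 1 ≤ Real.exp (-(l * t)) * Real.exp (l * X F) := by
      rw [← Real.exp_add]
      exact Real.one_le_exp (by nlinarith)
    nlinarith
  · positivity

variable [DecidableEq ι]

lemma bernoulliWeight_insert_insert {p : ℝ} {e : ι} {s F : Finset ι} (he : e ∉ s)
    (hF : F ⊆ s) : bernoulliWeight p (insert e s) (insert e F) = p * bernoulliWeight p s F := by
  rw [bernoulliWeight, bernoulliWeight, card_insert_of_notMem he,
    card_insert_of_notMem (fun h => he (hF h)), Nat.add_sub_add_right]
  ring

lemma bernoulliWeight_insert {p : ℝ} {e : ι} {s F : Finset ι} (he : e ∉ s) (hF : F ⊆ s) :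
    bernoulliWeight p (insert e s) F = (1 - p) * bernoulliWeight p s F := by
  rw [bernoulliWeight, bernoulliWeight, card_insert_of_notMem he,
    Nat.succ_sub (card_le_card hF), pow_succ]
  ring

lemma bernoulliMean_insert {p : ℝ} {e : ι} {s : Finset ι} (he : e ∉ s)
    (f : Finset ι → ℝ) :
    bernoulliMean p (insert e s) f =
      bernoulliMean p s (fun F => p * f (insert e F) + (1 - p) * f F) := by
  unfold bernoulliMean
  rw [sum_powerset_insert he, ← sum_add_distrib]
  refine sum_congr rfl fun F hF => ?_
  rw [bernoulliWeight_insert_insert he (mem_powerset.1 hF),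
    bernoulliWeight_insert he (mem_powerset.1 hF)]
  ring

def HasBoundedDifferences (f : Finset ι → ℝ) (c : ℝ) : Prop :=
  ∀ e F, |f (insert e F) - f F| ≤ c

lemma HasBoundedDifferences.neg {f : Finset ι → ℝ} {c : ℝ} (hf : HasBoundedDifferences f c) :
    HasBoundedDifferences (fun F => -f F) c := fun e F => by
  simpa [abs_sub_comm, neg_add_eq_sub] using hf e F

lemma HasBoundedDifferences.condMean {f : Finset ι → ℝ} {c p : ℝ} (hp0 : 0 ≤ p)
    (hp1 : p ≤ 1) (hf : HasBoundedDifferences f c) (e : ι) :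
    HasBoundedDifferences (fun F => p * f (insert e F) + (1 - p) * f F) c := fun e' F => by
  have h₁ := abs_le.1 (hf e' (insert e F))
  have h₂ := abs_le.1 (hf e' F)
  rw [insert_comm] at h₁
  refine abs_le.2 ⟨?_, ?_⟩ <;> nlinarith

theorem bernoulliMean_exp_le {p c : ℝ} (hp0 : 0 ≤ p) (hp1 : p ≤ 1) (hc : 0 < c) (l : ℝ)
    (s : Finset ι) {f : Finset ι → ℝ} (hf : HasBoundedDifferences f c) :
    bernoulliMean p s (fun F => Real.exp (l * (f F - bernoulliMean p s f))) ≤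
      Real.exp (s.card * (l ^ 2 * c ^ 2 / 2)) := by
  induction s using Finset.induction_on generalizing f with
  | empty => simp [bernoulliMean, bernoulliWeight]
  | @insert e s he ih =>
    set g := fun F => p * f (insert e F) + (1 - p) * f F with hg
    set μ := bernoulliMean p s g
    set q := l ^ 2 * c ^ 2 / 2
    have hμ : bernoulliMean p (insert e s) f = μ := bernoulliMean_insert he f
    have htwo (F : Finset ι) :
        p * Real.exp (l * (f (insert e F) - μ)) + (1 - p) * Real.exp (l * (f F - μ)) ≤
          Real.exp q * Real.exp (l * (g F - μ)) := by
      refine (two_point_exp_le hp0 hp1 hc (by simpa using hf e F) l).trans_eq ?_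
      rw [← Real.exp_add, hg]
      congr 1
      ring
    calc _ = bernoulliMean p s (fun F => p * Real.exp (l * (f (insert e F) - μ)) +
            (1 - p) * Real.exp (l * (f F - μ))) := by rw [bernoulliMean_insert he, hμ]
      _ ≤ bernoulliMean p s (fun F => Real.exp q * Real.exp (l * (g F - μ))) :=
          bernoulliMean_mono hp0 hp1 s htwo
      _ = Real.exp q * bernoulliMean p s (fun F => Real.exp (l * (g F - μ))) :=
          bernoulliMean_const_mul _ _ _ _
      _ ≤ Real.exp q * Real.exp (s.card * q) := by
          gcongr
          exact ih (hf.condMean hp0 hp1 e)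
      _ = Real.exp ((insert e s).card * q) := by
          rw [← Real.exp_add, card_insert_of_notMem he]
          push_cast
          ring_nf

theorem bernoulliProb_sub_mean_le {p c t : ℝ} (hp0 : 0 ≤ p) (hp1 : p ≤ 1) (hc : 0 < c)
    (ht : 0 ≤ t) {s : Finset ι} (hs : s.Nonempty) {f : Finset ι → ℝ}
    (hf : HasBoundedDifferences f c) :
    bernoulliProb p s (fun F => t ≤ f F - bernoulliMean p s f) ≤
      Real.exp (-(t ^ 2 / (2 * s.card * c ^ 2))) := by
  have hm : (0 : ℝ) < s.card := by exact_mod_cast hs.card_pos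
  set l := t / (s.card * c ^ 2) with hl
  calc bernoulliProb p s (fun F => t ≤ f F - bernoulliMean p s f)
      ≤ Real.exp (-(l * t)) * Real.exp (s.card * (l ^ 2 * c ^ 2 / 2)) := by
        refine (bernoulliProb_le_exp_mul hp0 hp1 s _ t (l := l) (by positivity)).trans ?_
        gcongr
        exact bernoulliMean_exp_le hp0 hp1 hc l s hf
    _ = Real.exp (-(t ^ 2 / (2 * s.card * c ^ 2))) := by
        rw [← Real.exp_add]
        congr 1
        rw [hl]
        field_simp
        ring

/-- **McDiarmid's inequality** for product Bernoulli measures. -/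
theorem bernoulliProb_abs_sub_mean_le {p c t : ℝ} (hp0 : 0 ≤ p) (hp1 : p ≤ 1) (hc : 0 < c)
    (ht : 0 ≤ t) {s : Finset ι} (hs : s.Nonempty) {f : Finset ι → ℝ}
    (hf : HasBoundedDifferences f c) :
    bernoulliProb p s (fun F => t ≤ |f F - bernoulliMean p s f|) ≤
      2 * Real.exp (-(t ^ 2 / (2 * s.card * c ^ 2))) := by
  have hneg := bernoulliProb_sub_mean_le hp0 hp1 hc ht hs hf.neg
  rw [bernoulliMean_neg] at hneg
  calc bernoulliProb p s (fun F => t ≤ |f F - bernoulliMean p s f|)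
      ≤ bernoulliProb p s (fun F => t ≤ f F - bernoulliMean p s f) +
          bernoulliProb p s (fun F => t ≤ -f F - -bernoulliMean p s f) :=
        bernoulliProb_le_add hp0 hp1 s fun F h => by
          rcases le_abs'.1 h with h | h
          · exact Or.inr (by linarith)
          · exact Or.inl h
    _ ≤ 2 * Real.exp (-(t ^ 2 / (2 * s.card * c ^ 2))) := by
        linarith [bernoulliProb_sub_mean_le hp0 hp1 hc ht hs hf]

end Finset

namespace SimpleGraph

def largeCompVerts (K : ℕ) (H : SimpleGraph V) : Set V := {v | K ≤ compCard H v}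

lemma compCard_mono [Finite V] {H H' : SimpleGraph V} (h : H ≤ H') (v : V) :
    compCard H v ≤ compCard H' v :=
  Set.ncard_le_ncard (fun _ hw => Reachable.mono h hw) (Set.toFinite _)

lemma largeCompVerts_mono [Finite V] (K : ℕ) {H H' : SimpleGraph V} (h : H ≤ H') :
    largeCompVerts K H ⊆ largeCompVerts K H' :=
  fun v hv => le_trans hv (compCard_mono h v)

lemma Reachable.of_sup_edge {H : SimpleGraph V} {x y v w : V}
    (h : (H ⊔ edge x y).Reachable v w) (hx : ¬H.Reachable v x) (hy : ¬H.Reachable v y) :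
    H.Reachable v w := by
  rw [reachable_iff_reflTransGen] at h
  induction h with
  | refl => rfl
  | tail _ hadj ih =>
    rcases (sup_adj _ _ _ _).1 hadj with hadj | hadj
    · exact ih.trans hadj.reachable
    · rcases (edge_adj _ _ _ _).1 hadj with ⟨⟨rfl, -⟩ | ⟨rfl, -⟩, -⟩
      exacts [absurd ih hx, absurd ih hy]

lemma ncard_reachable_diff_largeCompVerts_le [Finite V] (K : ℕ) (H : SimpleGraph V) (x : V) :
    ({w | H.Reachable x w} \ largeCompVerts K H).ncard ≤ K := by
  rcases ({w | H.Reachable x w} \ largeCompVerts K H).eq_empty_or_nonempty with h | ⟨w, hxw, hw⟩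
  · simp [h]
  · have hsub : {w | H.Reachable x w} \ largeCompVerts K H ⊆ {u | H.Reachable w u} :=
      fun u hu => (Reachable.symm hxw).trans hu.1
    exact (Set.ncard_le_ncard hsub (Set.toFinite _)).trans (not_le.1 hw).le

lemma ncard_largeCompVerts_sup_edge_le [Finite V] (K : ℕ) (H : SimpleGraph V) (x y : V) :
    (largeCompVerts K (H ⊔ edge x y)).ncard ≤ (largeCompVerts K H).ncard + 2 * K := by
  set A := largeCompVerts K (H ⊔ edge x y)
  set B := largeCompVerts K H
  have hsub : A \ B ⊆ ({w | H.Reachable x w} \ B) ∪ ({w | H.Reachable y w} \ B) := by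
    rintro v ⟨hvA, hvB⟩
    by_contra hv
    simp only [Set.mem_union, Set.mem_sdiff, Set.mem_ofPred_eq, hvB, not_false_eq_true,
      and_true, not_or] at hv
    have hle : compCard (H ⊔ edge x y) v ≤ compCard H v :=
      Set.ncard_le_ncard (fun w hw => hw.of_sup_edge (fun h => hv.1 h.symm)
        (fun h => hv.2 h.symm)) (Set.toFinite _)
    exact hvB (le_trans hvA hle)
  calc A.ncard = (A \ B).ncard + B.ncard :=
        (Set.ncard_sdiff_add_ncard_of_subset (largeCompVerts_mono K le_sup_left)).symm
    _ ≤ (({w | H.Reachable x w} \ B) ∪ ({w | H.Reachable y w} \ B)).ncard + B.ncard :=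
        Nat.add_le_add_right (Set.ncard_le_ncard hsub) _
    _ ≤ B.ncard + 2 * K := by
        have := Set.ncard_union_le ({w | H.Reachable x w} \ B) ({w | H.Reachable y w} \ B)
        linarith [ncard_reachable_diff_largeCompVerts_le K H x,
          ncard_reachable_diff_largeCompVerts_le K H y]

lemma hasBoundedDifferences_ncard_largeCompVerts [Finite V] [DecidableEq V] (K : ℕ) :
    Finset.HasBoundedDifferences
      (fun F : Finset (Sym2 V) => ((largeCompVerts K (fromEdgeSet (F : Set (Sym2 V)))).ncard : ℝ))
      (2 * K) := by
  intro e F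
  induction e using Sym2.ind with
  | _ x y =>
  set H := fromEdgeSet (F : Set (Sym2 V))
  have hH : fromEdgeSet (↑(insert s(x, y) F) : Set (Sym2 V)) = H ⊔ edge x y := by
    rw [Finset.coe_insert, Set.insert_eq, fromEdgeSet_union, sup_comm]
    rfl
  have hmono := Set.ncard_le_ncard (largeCompVerts_mono K (le_sup_left : H ≤ H ⊔ edge x y))
    (Set.toFinite _)
  have hgrow := ncard_largeCompVerts_sup_edge_le K H x y
  dsimp only
  rw [hH, abs_of_nonneg (sub_nonneg.2 (by exact_mod_cast hmono))]
  have hgrow' : ((largeCompVerts K (H ⊔ edge x y)).ncard : ℝ) ≤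
      (largeCompVerts K H).ncard + 2 * K := by
    exact_mod_cast hgrow
  linarith

end SimpleGraph

lemma two_mul_card_edgeFins [Fintype V] {G : SimpleGraph V} {d : ℕ} (hreg : IsRegOfDeg G d) :
    2 * (edgeFins G).card = Fintype.card V * d := by
  classical
  have hdeg : ∀ v, G.degree v = d := fun v => by
    rw [← hreg v, degAt, ← SimpleGraph.card_neighborSet_eq_degree, ← Nat.card_eq_fintype_card]
    rfl
  have hedge : edgeFins G = G.edgeFinset := by
    ext
    simp [edgeFins]
  rw [hedge, ← SimpleGraph.sum_degrees_eq_twice_card_edges, sum_congr rfl fun v _ => hdeg v]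
  simp

lemma rpow_div_le_sq_div {n d m : ℝ} (k : ℕ) (hn : 0 < n) (hd : 0 < d) (hm : 2 * m = n * d) :
    n ^ ((1 : ℝ) / 3) / (5 * d ^ (2 * k + 1)) ≤
      (n ^ ((2 : ℝ) / 3)) ^ 2 / (2 * m * (2 * d ^ k) ^ 2) := by
  have hsq : (n ^ ((2 : ℝ) / 3)) ^ 2 = n * n ^ ((1 : ℝ) / 3) := by
    rw [← Real.rpow_mul_natCast hn.le, ← Real.rpow_one_add' hn.le (by norm_num)]
    norm_num
  have hden : 2 * m * (2 * d ^ k) ^ 2 = n * (4 * d ^ (2 * k + 1)) := by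
    rw [hm]
    ring
  rw [hsq, hden, mul_div_mul_left _ _ hn.ne']
  gcongr
  norm_num

theorem stmt_16_general (V : Type) [Fintype V] (G : SimpleGraph V) (d : ℕ) (hd : 1 ≤ d)
    (hreg : IsRegOfDeg G d) (n : ℕ) (hn : n = Fintype.card V)
    (p : ℝ) (hp0 : 0 ≤ p) (hp1 : p ≤ 1) (k : ℕ) :
    percProb G p (fun H =>
        (n : ℝ) ^ ((2 : ℝ) / 3) ≤
          |({v | d ^ k ≤ compCard H v}.ncard : ℝ) -
            percExp G p (fun H' => (({v | d ^ k ≤ compCard H' v}).ncard : ℝ))|) ≤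
      2 * Real.exp (-(n : ℝ) ^ ((1 : ℝ) / 3) / (5 * (d : ℝ) ^ (2 * k + 1))) := by
  classical
  set s := edgeFins G
  set f : Finset (Sym2 V) → ℝ := fun F =>
    ((SimpleGraph.largeCompVerts (d ^ k) (SimpleGraph.fromEdgeSet (F : Set (Sym2 V)))).ncard : ℝ)
  change bernoulliProb p s (fun F => (n : ℝ) ^ ((2 : ℝ) / 3) ≤ |f F - bernoulliMean p s f|)
    ≤ _
  rcases Nat.eq_zero_or_pos n with rfl | hn0
  · refine (bernoulliProb_le_one hp0 hp1 _ _).trans ?_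
    norm_num
  have hm : 2 * s.card = n * d := by rw [two_mul_card_edgeFins hreg, hn]
  have hs : s.Nonempty := card_pos.1 (by nlinarith)
  have hc : (0 : ℝ) < 2 * ((d ^ k : ℕ) : ℝ) := by positivity
  refine (bernoulliProb_abs_sub_mean_le hp0 hp1 hc (by positivity) hs
    (SimpleGraph.hasBoundedDifferences_ncard_largeCompVerts (d ^ k))).trans ?_
  rw [neg_div]
  gcongr 2 * Real.exp (-?_)
  push_cast
  exact rpow_div_le_sq_div (m := s.card) k (Nat.cast_pos.2 hn0) (Nat.cast_pos.2 hd)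
    (by exact_mod_cast hm)

/-- concentration (Azuma–Hoeffding) of the number `|W|` of vertices in
components of `G_p` of order at least `d^k`:
`P[||W| - E|W|| ≥ n^{2/3}] ≤ 2 exp(-n^{1/3}/(5 d^{2k+1}))`. -/
theorem stmt_16 (V : Type) [Fintype V] (G : SimpleGraph V) (d : ℕ) (hd : 1 ≤ d)
    (hreg : IsRegOfDeg G d) (n : ℕ) (hn : n = Fintype.card V)
    (p : ℝ) (hp0 : 0 ≤ p) (hp1 : p ≤ 1) (k : ℕ) (hk : 1 ≤ k) :
    percProb G p (fun H =>
        (n : ℝ) ^ ((2 : ℝ) / 3) ≤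
          |({v | d ^ k ≤ compCard H v}.ncard : ℝ) -
            percExp G p (fun H' => (({v | d ^ k ≤ compCard H' v}).ncard : ℝ))|) ≤
      2 * Real.exp (-(n : ℝ) ^ ((1 : ℝ) / 3) / (5 * (d : ℝ) ^ (2 * k + 1))) :=
  stmt_16_general V G d hd hreg n hn p hp0 hp1 k
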